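/- arXiv:2503.01388 — 2 statements merged into one kernel-verified Lean document; each statement's English description precedes it below -/
import Mathlib

section
/- Assume the setup: k ≥ 1 is an integer, P and T are strings with |P| ≤ |T|, Q is a primitive string with 128k·|Q| ≤ |P|, r ∈ {0,…,|Q|−1}, P̄ := Q^∞[r..r+|P|), T̄ := Q^∞[0..|T|), δ_H(P,P̄) ≤ 2k, and δ_H(T,T̄) ≤ 6k; τ_0 < τ_1 < … < τ_{b−1} are the elements of Mis(T,T̄), with τ_{−1} := −1 and τ_b := |T|, and R_i := {x ∈ ℤ : τ_{i−1} < x ≤ τ_i} for 0 ≤ i ≤ b; C_r := {x ∈ ℤ≥0 : x ≡ r (mod |Q|)}. Then for every set A of nonnegative integers and all integers s, t with 0 ≤ s ≤ t ≤ b satisfying δ_H(P,P̄) + (t − s) ≤ k, it holds that Ext_k(P,T,A ∩ R_s) ∩ R_t = ((C_r ∩ A ∩ R_s) + |P|) ∩ R_t. -/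
/-!
A window `T[x..x+|P|)` is within `δ_H(T, T̄)` of `Q^∞[x..x+|P|)`, and two rotations of the
primitive string `Q` that start at incongruent positions mod `|Q|` disagree once per period,
hence at least `|P|/|Q| ≥ 128k` times. By the triangle inequality a `k`-mismatch occurrence of
`P` (which is within `k` of `P̄ = Q^∞[r..r+|P|)`) can therefore only start at `x ≡ r`.
Conversely, if `x ≡ r`, `x ∈ R_s` and `x + |P| ∈ R_t`, the only mismatches between `T` and `T̄`
inside the window are `τ_s, …, τ_{t-1}`, so `δ_H(P, T[x..x+|P|)) ≤ δ_H(P, P̄) + (t - s) ≤ k`.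
-/

/-- Mismatch positions of two (equal-length) strings:
`Mis(X,Y) = {i : X[i] ≠ Y[i]}`. -/
def mis {α : Type*} [DecidableEq α] [Inhabited α] (X Y : List α) : Finset ℕ :=
  (Finset.range (min X.length Y.length)).filter (fun i => X.getD i default ≠ Y.getD i default)

/-- Hamming distance of two (equal-length) strings: the number of mismatch positions. -/
def hdist {α : Type*} [DecidableEq α] [Inhabited α] (X Y : List α) : ℕ := (mis X Y).card

/-- The fragment `S[x..x+L)`. -/
def frag {α : Type*} (S : List α) (x L : ℕ) : List α := (S.drop x).take L

/-- `Q^∞[a..a+L)`: the string of length `L` whose `i`-th character is `Q[(a+i) mod |Q|]`. -/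
def qinf {α : Type*} [Inhabited α] (Q : List α) (a L : ℕ) : List α :=
  (List.range L).map (fun i => Q.getD ((a + i) % Q.length) default)

/-- A nonempty string is primitive if it is not of the form `Y^h` with `h ≥ 2`. -/
def Primitive {α : Type*} (Q : List α) : Prop :=
  Q ≠ [] ∧ ∀ (Y : List α) (h : ℕ), 2 ≤ h → Q ≠ (List.replicate h Y).flatten

/-- `Occ_k(P,T)`: the set of starting positions of `k`-mismatch occurrences of `P` in `T`. -/
def occSet {α : Type*} [DecidableEq α] [Inhabited α] (k : ℕ) (P T : List α) : Set ℕ :=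
  {x | x + P.length ≤ T.length ∧ hdist P (frag T x P.length) ≤ k}

/-- `Ext_k(P,T,A) = {x + |P| : x ∈ Occ_k(P,T) ∩ A}` (as a set of integers). -/
def extSet {α : Type*} [DecidableEq α] [Inhabited α] (k : ℕ) (P T : List α) (A : Set ℤ) :
    Set ℤ :=
  {y | ∃ x : ℕ, x ∈ occSet k P T ∧ (x : ℤ) ∈ A ∧ y = (x : ℤ) + P.length}

lemma Function.Periodic.intGCD {β : Type*} {F : ℤ → β} {c q : ℤ} (hc : Function.Periodic F c)
    (hq : Function.Periodic F q) : Function.Periodic F (Int.gcd c q) := by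
  have hd : (Int.gcd c q : ℤ) = Int.gcdA c q * c + Int.gcdB c q * q := by
    rw [Int.gcd_eq_gcd_ab]; ring
  exact hd ▸ (hc.int_mul _).add_period (hq.int_mul _)

section Periodicity

variable {α : Type*} [Inhabited α]

lemma Primitive.eq_length_of_periodic {Q : List α} (hQ : Primitive Q) {d : ℕ}
    (hdQ : d ∣ Q.length) (hper : ∀ i < Q.length, Q.getD i default = Q.getD (i % d) default) :
    d = Q.length := by
  obtain ⟨n, hn⟩ := hdQ
  have hQ0 := hQ.1
  by_contra hne
  have h2 : 2 ≤ n := by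
    rcases n with _ | _ | n <;> simp_all
  refine hQ.2 (List.ofFn fun i : Fin d => Q.getD i default) n h2 ?_
  rw [← List.ofFn_fin_repeat]
  refine List.ext_getElem (by simp [hn, mul_comm]) fun i h1 _ => ?_
  rw [List.getElem_ofFn, Fin.repeat_apply, ← List.getD_eq_getElem _ default h1, hper i h1]
  rfl

lemma Primitive.exists_getD_ne {Q : List α} (hQ : Primitive Q) {a b : ℕ}
    (hab : a % Q.length ≠ b % Q.length) :
    ∃ j, Q.getD ((a + j) % Q.length) default ≠ Q.getD ((b + j) % Q.length) default := by
  -- otherwise `Q` has the proper period `gcd (b - a) |Q|`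
  by_contra! hrot
  set q := Q.length
  have hq0 : 0 < q := List.length_pos_iff.mpr hQ.1
  set F : ℤ → α := fun i => Q.getD (i % q).toNat default with hF
  have hFq : Function.Periodic F q := fun i => by simp [hF]
  have hFab : Function.Periodic F (b - a) := fun i => by
    set j := ((i - a) % q).toNat
    have hj : (j : ℤ) = (i - a) % q := Int.toNat_of_nonneg (Int.emod_nonneg _ (by omega))
    have key : ∀ c : ℕ, (c + j) % q = ((i + (c - a)) % q).toNat := fun c => by
      rw [← Int.toNat_natCast ((c + j) % q)]
      push_cast
      rw [hj, Int.add_emod_emod]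
      ring_nf
    simpa [hF, key] using (hrot j).symm
  set d := Int.gcd (b - a) q
  have hFd : Function.Periodic F d := hFab.intGCD hFq
  have hd0 : 0 < d := Int.gcd_pos_of_ne_zero_right _ (by omega)
  have hdq : d ∣ q := Int.natCast_dvd_natCast.mp (Int.gcd_dvd_right _ _)
  have hperQ : ∀ i < q, Q.getD i default = Q.getD (i % d) default := fun i hi => by
    have hFnat : ∀ n < q, F n = Q.getD n default := fun n hn => by
      simp [hF, ← Int.natCast_mod, Nat.mod_eq_of_lt hn]
    have hmod : ((i % d : ℕ) : ℤ) = i - (i / d : ℕ) * d := by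
      rw [eq_sub_iff_add_eq]; exact_mod_cast Nat.mod_add_div' i d
    rw [← hFnat i hi, ← hFnat (i % d) ((Nat.mod_lt i hd0).trans_le (Nat.le_of_dvd hq0 hdq)), hmod,
      hFd.sub_nat_mul_eq]
  have hdq_eq : d = q := hQ.eq_length_of_periodic hdq hperQ
  have hqab : (q : ℤ) ∣ b - a := hdq_eq ▸ Int.gcd_dvd_left _ _
  exact hab (Int.natCast_modEq_iff.mp (Int.modEq_iff_dvd.mpr hqab))

@[simp] lemma length_qinf (Q : List α) (a L : ℕ) : (qinf Q a L).length = L := by simp [qinf]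

lemma qinf_eq_of_mod_eq (Q : List α) {a b : ℕ} (L : ℕ) (h : a % Q.length = b % Q.length) :
    qinf Q a L = qinf Q b L := by
  simp only [qinf, Nat.add_mod a, h, ← Nat.add_mod]

lemma frag_qinf (Q : List α) {N x L : ℕ} (h : x + L ≤ N) :
    frag (qinf Q 0 N) x L = qinf Q x L :=
  List.ext_getElem (by simp [frag]; omega) fun i _ _ => by simp [frag, qinf]

end Periodicity

section Hamming

variable {α : Type*} [DecidableEq α] [Inhabited α]

lemma mem_mis {X Y : List α} {i : ℕ} :
    i ∈ mis X Y ↔ i < min X.length Y.length ∧ X.getD i default ≠ Y.getD i default := by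
  simp [mis]

lemma hdist_comm (X Y : List α) : hdist X Y = hdist Y X := by
  simp only [hdist, mis, min_comm X.length, ne_comm]

lemma hdist_triangle {X Y Z : List α} (hXY : X.length = Y.length) (hYZ : Y.length = Z.length) :
    hdist X Z ≤ hdist X Y + hdist Y Z := by
  have hsub : mis X Z ⊆ mis X Y ∪ mis Y Z := fun i hi => by
    rw [mem_mis] at hi
    rw [Finset.mem_union, mem_mis, mem_mis]
    by_cases h : X.getD i default = Y.getD i default
    · exact Or.inr ⟨by omega, h ▸ hi.2⟩
    · exact Or.inl ⟨by omega, h⟩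
  exact (Finset.card_le_card hsub).trans (Finset.card_union_le _ _)

lemma hdist_frag_le (X Y : List α) (x L : ℕ) :
    hdist (frag X x L) (frag Y x L) ≤ (mis X Y ∩ Finset.Ico x (x + L)).card := by
  refine Finset.card_le_card_of_injOn (x + ·) (fun i hi => ?_) (fun i _ j _ h => by simpa using h)
  simp only [Finset.mem_coe, mem_mis, frag, List.length_take, List.length_drop] at hi
  simp only [Finset.mem_coe, Finset.mem_inter, mem_mis, Finset.mem_Ico]
  refine ⟨⟨by omega, ?_⟩, by omega, by omega⟩
  simpa [frag, show i < L by omega] using hi.2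

lemma hdist_frag_qinf_le (T Q : List α) {x L : ℕ} (h : x + L ≤ T.length) :
    hdist (frag T x L) (qinf Q x L) ≤ (mis T (qinf Q 0 T.length) ∩ Finset.Ico x (x + L)).card :=
  frag_qinf Q h ▸ hdist_frag_le _ _ _ _

lemma Primitive.div_length_le_hdist_qinf {Q : List α} (hQ : Primitive Q) {a b : ℕ}
    (hab : a % Q.length ≠ b % Q.length) (L : ℕ) :
    L / Q.length ≤ hdist (qinf Q a L) (qinf Q b L) := by
  have hq : 0 < Q.length := List.length_pos_iff.mpr hQ.1
  obtain ⟨j, hj⟩ := hQ.exists_getD_ne hab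
  -- the mismatch at `j` recurs once in every period
  have hcard := Finset.card_le_card_of_injOn (fun l => j % Q.length + l * Q.length)
    (s := Finset.range (L / Q.length)) (t := mis (qinf Q a L) (qinf Q b L)) (fun l hl => ?_)
    (fun l₁ _ l₂ _ h => Nat.eq_of_mul_eq_mul_right hq (by simpa using h))
  · simpa [hdist] using hcard
  have hlt : j % Q.length + l * Q.length < L := by
    have hl' := (Nat.le_div_iff_mul_le hq).mp (Finset.mem_range.mp hl)
    rw [Nat.succ_mul] at hl'
    have := Nat.mod_lt j hq
    omega
  simp only [Finset.mem_coe, mem_mis]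
  simpa [qinf, hlt, ← add_assoc, Nat.add_mul_mod_self_right] using hj

lemma mod_eq_of_mem_occSet {k r x : ℕ} {P T Q : List α} (hQ : Primitive Q)
    (hx : x ∈ occSet k P T)
    (hsep : hdist P (qinf Q r P.length) + k + hdist T (qinf Q 0 T.length) < P.length / Q.length) :
    x % Q.length = r % Q.length := by
  obtain ⟨hxT, hxk⟩ := hx
  by_contra hne
  have hlen : (frag T x P.length).length = P.length := by simp [frag]; omega
  have hwin : hdist (frag T x P.length) (qinf Q x P.length) ≤ hdist T (qinf Q 0 T.length) :=
    (hdist_frag_qinf_le T Q hxT).trans (Finset.card_le_card Finset.inter_subset_left)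
  have := calc
    P.length / Q.length ≤ hdist (qinf Q r P.length) (qinf Q x P.length) :=
      hQ.div_length_le_hdist_qinf (Ne.symm hne) _
    _ ≤ hdist (qinf Q r P.length) P + hdist P (qinf Q x P.length) :=
      hdist_triangle (by simp) (by simp)
    _ ≤ hdist (qinf Q r P.length) P + (hdist P (frag T x P.length) +
          hdist (frag T x P.length) (qinf Q x P.length)) :=
      Nat.add_le_add_left (hdist_triangle hlen.symm (by simp [hlen])) _
  rw [hdist_comm] at this
  omega

lemma hdist_frag_le_of_mod_eq {r x : ℕ} {P T Q : List α} (hxr : x % Q.length = r % Q.length)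
    (hxT : x + P.length ≤ T.length) :
    hdist P (frag T x P.length) ≤ hdist P (qinf Q r P.length) +
      (mis T (qinf Q 0 T.length) ∩ Finset.Ico x (x + P.length)).card := by
  have hlen : (frag T x P.length).length = P.length := by simp [frag]; omega
  calc hdist P (frag T x P.length)
      ≤ hdist P (qinf Q r P.length) + hdist (qinf Q r P.length) (frag T x P.length) :=
        hdist_triangle (by simp) (by simp [hlen])
    _ ≤ _ := by
      rw [hdist_comm (qinf Q r _), ← qinf_eq_of_mod_eq Q _ hxr]
      exact Nat.add_le_add_left (hdist_frag_qinf_le T Q hxT) _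

end Hamming

lemma card_inter_Ico_le_of_strictMonoOn {M : Finset ℕ} {b : ℕ} {τ : ℤ → ℤ}
    (hτ : StrictMonoOn τ (Set.Ico 0 b)) (hM : ∀ m ∈ M, ∃ i : ℤ, 0 ≤ i ∧ i < b ∧ τ i = m)
    {s t : ℤ} (hsb : s ≤ b) (ht : 0 ≤ t) {x y : ℕ} (hx : τ (s - 1) < x) (hy : y ≤ τ t) :
    (M ∩ Finset.Ico x y).card ≤ (t - s).toNat := by
  rw [← Int.card_Ico]
  refine (Finset.card_le_card_of_injOn (fun m : ℕ => (m : ℤ)) (t := (Finset.Ico s t).image τ)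
    (fun m hm => ?_) (fun _ _ _ _ h => by simpa using h)).trans Finset.card_image_le
  simp only [Finset.coe_inter, Set.mem_inter_iff, Finset.mem_coe, Finset.mem_Ico] at hm
  obtain ⟨i, hi0, hib, hτi⟩ := hM m hm.1
  refine Finset.mem_image.mpr ⟨i, Finset.mem_Ico.mpr ⟨?_, ?_⟩, hτi⟩
  · by_contra! his
    have := hτ.monotoneOn ⟨hi0, hib⟩ ⟨by omega, by omega⟩ (by omega : i ≤ s - 1)
    omega
  · by_contra! hti
    have := hτ.monotoneOn ⟨ht, by omega⟩ ⟨hi0, hib⟩ hti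
    omega

theorem stmt7_general {α : Type*} [DecidableEq α] [Inhabited α]
    (k : ℕ) (hk : 1 ≤ k) (P T Q : List α)
    (hQprim : Primitive Q) (hQP : 128 * k * Q.length ≤ P.length)
    (r : ℕ)
    (hTper : hdist T (qinf Q 0 T.length) ≤ 6 * k)
    (b : ℕ) (τ : ℤ → ℤ)
    (hmono : ∀ i j : ℤ, 0 ≤ i → i < j → j < b → τ i < τ j)
    (hmem : ∀ i : ℤ, 0 ≤ i → i < b → ∃ m ∈ mis T (qinf Q 0 T.length), (m : ℤ) = τ i)
    (hsurj : ∀ m ∈ mis T (qinf Q 0 T.length), ∃ i : ℤ, 0 ≤ i ∧ i < b ∧ τ i = m)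
    (hend : τ b = T.length)
    (A : Set ℤ)
    (s t : ℤ) (hs : 0 ≤ s) (hst : s ≤ t) (htb : t ≤ b)
    (hcase : (hdist P (qinf Q r P.length) : ℤ) + (t - s) ≤ k) :
    extSet k P T (A ∩ Set.Ioc (τ (s - 1)) (τ s)) ∩ Set.Ioc (τ (t - 1)) (τ t) =
      ((fun z => z + (P.length : ℤ)) ''
          ({x : ℤ | 0 ≤ x ∧ x % (Q.length : ℤ) = (r : ℤ) % (Q.length : ℤ)} ∩ A ∩
            Set.Ioc (τ (s - 1)) (τ s))) ∩
        Set.Ioc (τ (t - 1)) (τ t) := by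
  have hq : 0 < Q.length := List.length_pos_iff.mpr hQprim.1
  have hτ : StrictMonoOn τ (Set.Ico 0 b) := fun i hi j hj hij => hmono i j hi.1 hij hj.2
  have hτt : τ t ≤ T.length := by
    rcases htb.lt_or_eq with htb | rfl
    · obtain ⟨m, hm, hmt⟩ := hmem t (by omega) htb
      have := (mem_mis.mp hm).1
      simp only [length_qinf, min_self] at this
      omega
    · exact hend.le
  have hsep : hdist P (qinf Q r P.length) + k + hdist T (qinf Q 0 T.length) <
      P.length / Q.length := by
    -- `hcase` gives `δ_H(P, P̄) ≤ k`, so the left side is at most `8k`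
    have := (Nat.le_div_iff_mul_le hq).mpr hQP
    omega
  ext y
  simp only [extSet, Set.mem_inter_iff, Set.mem_image, Set.mem_ofPred_eq, Set.mem_Ioc]
  constructor
  · rintro ⟨⟨x, hx, ⟨hxA, hxs⟩, rfl⟩, hyt⟩
    have hxr : x % Q.length = r % Q.length := mod_eq_of_mem_occSet hQprim hx hsep
    exact ⟨⟨x, ⟨⟨⟨x.cast_nonneg, by exact_mod_cast hxr⟩, hxA⟩, hxs⟩, rfl⟩, hyt⟩
  · rintro ⟨⟨x, ⟨⟨⟨hx0, hxr⟩, hxA⟩, hxs⟩, rfl⟩, hyt⟩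
    lift x to ℕ using hx0
    have hxT : x + P.length ≤ T.length := by omega
    have hcount := card_inter_Ico_le_of_strictMonoOn (t := t) (y := x + P.length) hτ hsurj
      (by omega) (by omega) hxs.1 (by push_cast; exact hyt.2)
    have := hdist_frag_le_of_mod_eq (by exact_mod_cast hxr) hxT
    exact ⟨⟨x, ⟨hxT, by omega⟩, ⟨hxA, hxs⟩, rfl⟩, hyt⟩

/-- First case of the key structural lemma: if `δ_H(P,P̄) + (t - s) ≤ k` then
`Ext_k(P, T, A ∩ R_s) ∩ R_t = ((C_r ∩ A ∩ R_s) + |P|) ∩ R_t`. -/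
theorem stmt7 {α : Type*} [DecidableEq α] [Inhabited α]
    (k : ℕ) (hk : 1 ≤ k) (P T Q : List α) (hPT : P.length ≤ T.length)
    (hQprim : Primitive Q) (hQP : 128 * k * Q.length ≤ P.length)
    (r : ℕ) (hr : r < Q.length)
    (hPper : hdist P (qinf Q r P.length) ≤ 2 * k)
    (hTper : hdist T (qinf Q 0 T.length) ≤ 6 * k)
    (b : ℕ) (τ : ℤ → ℤ)
    (hmono : ∀ i j : ℤ, 0 ≤ i → i < j → j < b → τ i < τ j)
    (hmem : ∀ i : ℤ, 0 ≤ i → i < b → ∃ m ∈ mis T (qinf Q 0 T.length), (m : ℤ) = τ i)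
    (hsurj : ∀ m ∈ mis T (qinf Q 0 T.length), ∃ i : ℤ, 0 ≤ i ∧ i < b ∧ τ i = m)
    (hneg : τ (-1) = -1) (hend : τ b = T.length)
    (A : Set ℤ) (hA : ∀ x ∈ A, 0 ≤ x)
    (s t : ℤ) (hs : 0 ≤ s) (hst : s ≤ t) (htb : t ≤ b)
    (hcase : (hdist P (qinf Q r P.length) : ℤ) + (t - s) ≤ k) :
    extSet k P T (A ∩ Set.Ioc (τ (s - 1)) (τ s)) ∩ Set.Ioc (τ (t - 1)) (τ t) =
      ((fun z => z + (P.length : ℤ)) ''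
          ({x : ℤ | 0 ≤ x ∧ x % (Q.length : ℤ) = (r : ℤ) % (Q.length : ℤ)} ∩ A ∩
            Set.Ioc (τ (s - 1)) (τ s))) ∩
        Set.Ioc (τ (t - 1)) (τ t) :=
  stmt7_general k hk P T Q hQprim hQP r hTper b τ hmono hmem hsurj hend A s t hs hst htb hcase
end

section
/- Let P and T be strings over an alphabet Σ and suppose P = F_1F_2⋯F_t, where each F_i is a nonempty substring (contiguous fragment) of T and, for each 1 ≤ i < t, the string obtained by extending F_i with the first character of F_{i+1} is not a substring of T. Then for every position a with 0 ≤ a ≤ |T|−|P|, δ_H(P, T[a..a+|P|)) ≥ ⌊t/2⌋. -/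
/-! Each phrase `Fᵢ` extended by the first character of `Fᵢ₊₁` is not a substring of `T`,
whereas the aligned fragment of any window of `T` is. Hence every pair `FᵢFᵢ₊₁` of consecutive
phrases contains a mismatch, and the `⌊t/2⌋` disjoint pairs `F₁F₂, F₃F₄, …` give one each. -/

section Hamming

variable {α : Type*} [DecidableEq α] [Inhabited α]

@[simp]
lemma hdist_nil_left (Y : List α) : hdist [] Y = 0 := by
  simp [hdist, mis]

@[simp]
lemma hdist_nil_right (X : List α) : hdist X [] = 0 := by
  simp [hdist, mis]

lemma hdist_cons_cons (x y : α) (X Y : List α) :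
    hdist (x :: X) (y :: Y) = (if x = y then 0 else 1) + hdist X Y := by
  simp only [hdist, mis, Finset.card_filter, List.length_cons, Nat.add_min_add_right,
    Finset.sum_range_succ', List.getD_cons_succ, List.getD_cons_zero, ne_eq, ite_not]
  exact add_comm _ _

lemma hdist_append_left (X₁ X₂ Y : List α) :
    hdist (X₁ ++ X₂) Y = hdist X₁ (Y.take X₁.length) + hdist X₂ (Y.drop X₁.length) := by
  induction X₁ generalizing Y with
  | nil => simp
  | cons x X₁ ih =>
    cases Y with
    | nil => simp
    | cons y Y => simp only [List.cons_append, List.length_cons, List.take_succ_cons,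
        List.drop_succ_cons, hdist_cons_cons, ih]; omega

lemma hdist_le_of_prefix {X X' Y Y' : List α} (hX : X <+: X') (hY : Y <+: Y')
    (hlen : X.length = Y.length) : hdist X Y ≤ hdist X' Y' := by
  obtain ⟨X₂, rfl⟩ := hX
  obtain ⟨Y₂, rfl⟩ := hY
  simp [hdist_append_left, hlen]

lemma eq_of_hdist_eq_zero {X Y : List α} (h : hdist X Y = 0) (hlen : X.length = Y.length) :
    X = Y := by
  induction X generalizing Y with
  | nil => exact (List.length_eq_zero_iff.1 hlen.symm).symm
  | cons x X ih =>
    cases Y with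
    | nil => simp at hlen
    | cons y Y =>
      rw [hdist_cons_cons] at h
      split_ifs at h with hxy
      · rw [hxy, ih (Y := Y) (by omega) (by simpa using hlen)]
      · omega

lemma one_le_hdist_of_not_infix {X Y T : List α} (hX : ¬ X <:+: T) (hY : Y <:+: T)
    (hlen : X.length = Y.length) : 1 ≤ hdist X Y := by
  by_contra! h
  exact hX (eq_of_hdist_eq_zero (by omega) hlen ▸ hY)

end Hamming

lemma frag_infix {α : Type*} (S : List α) (x L : ℕ) : frag S x L <:+: S :=
  (List.take_prefix _ _).isInfix.trans (List.drop_suffix x S).isInfix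

lemma length_frag {α : Type*} {S : List α} {x L : ℕ} (h : x + L ≤ S.length) :
    (frag S x L).length = L := by
  simp [frag]; omega

lemma length_div_two_le_hdist_flatten {α : Type*} [DecidableEq α] [Inhabited α] (T : List α) :
    ∀ (Fs : List (List α)) (Y : List α), (∀ F ∈ Fs, F ≠ []) →
      Fs.IsChain (fun F G => ¬ F ++ [G.headI] <:+: T) → Y <:+: T →
      Y.length = Fs.flatten.length → Fs.length / 2 ≤ hdist Fs.flatten Y
  | [], _, _, _, _, _ => by simp
  | [_], _, _, _, _, _ => by simp
  | F :: G :: Fs, Y, hne, hchain, hY, hlen => by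
    obtain ⟨hFG, hchain⟩ := List.isChain_cons_cons.1 hchain
    have hG : G ≠ [] := hne G (by simp)
    have hGlen : 0 < G.length := List.length_pos_of_ne_nil hG
    have hsplit : (F :: G :: Fs).flatten = (F ++ G) ++ Fs.flatten := by simp
    have hlenFG : F.length + G.length ≤ Y.length := by simp [hsplit] at hlen; omega
    have hprefix : F ++ [G.headI] <+: F ++ G := by
      obtain ⟨g, G, rfl⟩ := List.exists_cons_of_ne_nil hG
      exact (List.prefix_append_right_inj F).2 (by simp)
    have hpair : 1 ≤ hdist (F ++ G) (Y.take (F ++ G).length) :=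
      calc 1 ≤ hdist (F ++ [G.headI]) (Y.take (F.length + 1)) :=
            one_le_hdist_of_not_infix hFG ((List.take_prefix _ _).isInfix.trans hY)
              (by simp; omega)
        _ ≤ _ := hdist_le_of_prefix hprefix
            (List.take_prefix_take_left (by simp; omega)) (by simp; omega)
    have hrest : Fs.length / 2 ≤ hdist Fs.flatten (Y.drop (F ++ G).length) :=
      length_div_two_le_hdist_flatten T Fs _ (fun F hF => hne F (by simp [hF]))
        hchain.tail ((List.drop_suffix _ _).isInfix.trans hY) (by simp [hsplit] at hlen ⊢; omega)
    rw [hsplit, hdist_append_left]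
    simp only [List.length_cons]
    omega

/-- If `P = F₁F₂⋯F_t`, each `Fᵢ` a nonempty substring of `T`, and no `Fᵢ` extended by the
first character of `Fᵢ₊₁` is a substring of `T`, then any fragment of `T` of length `|P|`
has at least `⌊t/2⌋` mismatches with `P`. -/
theorem stmt10 {α : Type*} [DecidableEq α] [Inhabited α]
    (P T : List α) (t : ℕ) (Fs : List (List α)) (hlen : Fs.length = t)
    (hP : P = Fs.flatten)
    (hsub : ∀ F ∈ Fs, F ≠ [] ∧ F <:+: T)
    (hext : ∀ i : ℕ, i + 1 < t → ¬ (Fs.getD i [] ++ [(Fs.getD (i + 1) []).headI]) <:+: T) :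
    ∀ a : ℕ, a + P.length ≤ T.length → t / 2 ≤ hdist P (frag T a P.length) := by
  intro a ha
  subst hP hlen
  have hchain : Fs.IsChain (fun F G => ¬ F ++ [G.headI] <:+: T) :=
    List.isChain_iff_getElem.2 fun i hi => by
      simpa [List.getElem?_eq_getElem hi, List.getElem?_eq_getElem (Nat.lt_of_succ_lt hi)]
        using hext i hi
  exact length_div_two_le_hdist_flatten T Fs _ (fun F hF => (hsub F hF).1) hchain
    (frag_infix T a _) (length_frag ha)
end
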